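/- Suppose r is the nonzero Gauss remainder of nonzero a, b ∈ ℤ[i] with φ(r) ≥ φ(b) = n. If Im(u_b·b)·Im(u_r·r) ≥ 0, then φ(r - (u_b/u_r)·b) < φ(b). -/

import Mathlib

open GaussianInt

noncomputable section

/-- The sequence w: w_{2k} = 3·2^k, w_{2k+1} = 4·2^k. -/
def w (n : ℕ) : ℤ := if n % 2 = 0 then 3 * 2 ^ (n / 2) else 4 * 2 ^ (n / 2)

/-- 2-adic valuation of gcd(Re z, Im z). -/
def v2 (z : GaussianInt) : ℕ := padicValNat 2 (Int.gcd z.re z.im)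

/-- ℓ₁ norm. -/
def l1 (z : GaussianInt) : ℤ := |z.re| + |z.im|

/-- ℓ∞ norm. -/
def linf (z : GaussianInt) : ℤ := max |z.re| |z.im|

/-- m(z) = min(|Re z|, |Im z|). -/
def mm (z : GaussianInt) : ℤ := min |z.re| |z.im|

/-- The algebraic norm. -/
def Nm (z : GaussianInt) : ℤ := z.re ^ 2 + z.im ^ 2

/-- Graves' formula for the minimal Euclidean function φ on ℤ[i]. -/
def phi (z : GaussianInt) : ℕ :=
  let j := v2 z
  let n := sInf {n : ℕ | |z.re| ≤ 2 ^ j * (w n - 2) ∧ |z.im| ≤ 2 ^ j * (w n - 2)}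
  if l1 z ≤ 2 ^ j * (w (n + 1) - 3) then n + 2 * j else n + 2 * j + 1

/-- Nearest integer, rounding halves down. -/
def nint (x : ℚ) : ℤ := if x - ⌊x⌋ ≤ 1 / 2 then ⌊x⌋ else ⌈x⌉

/-- Gauss quotient: coordinatewise nearest-integer rounding of a·conj(b)/Nm(b). -/
def gq (a b : GaussianInt) : GaussianInt :=
  ⟨nint (((a.re * b.re + a.im * b.im : ℤ) : ℚ) / ((b.re ^ 2 + b.im ^ 2 : ℤ) : ℚ)),
   nint (((a.im * b.re - a.re * b.im : ℤ) : ℚ) / ((b.re ^ 2 + b.im ^ 2 : ℤ) : ℚ))⟩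

/-- Gauss remainder. -/
def gr (a b : GaussianInt) : GaussianInt := a - gq a b * b

/-- The imaginary unit in ℤ[i]. -/
def Ii : GaussianInt := ⟨0, 1⟩

/-- The canonical unit u_z. -/
def uz (z : GaussianInt) : GaussianInt :=
  if |z.re| > |z.im| then (if 0 < z.re then 1 else -1)
  else if |z.im| > |z.re| then (if 0 < z.im then -Ii else Ii)
  else if 0 < z.re then (if 0 < z.im then 1 else Ii)
  else (if 0 < z.im then -Ii else -1)

/-- s(z) = sgn(Im(u_z·z)). -/
def sfun (z : GaussianInt) : ℤ := Int.sign ((uz z * z).im)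

/-!
Multiplying by the canonical units turns `b` and `r` into `x = u_b b` and `y = u_r r`, both in
the sector `|Im| ≤ Re` and, by hypothesis, with imaginary parts of the same sign. Since `φ` is
unit-invariant, the claim becomes `φ(y - x) < φ(x)`.

The Gauss remainder satisfies `2 |Re (r b̄)|, 2 |Im (r b̄)| ≤ Nm b`, hence `2 ⟨y, x⟩ ≤ |x|²`, so
`2 Re y ≤ Re x + |Im x|` and `Re y + |Im y| ≤ Re x`. Write `φ(x) = 2j + s + 1` with `j = v₂(x)`.
If `v₂(y) ≤ j`, these bounds would put `y` inside Graves' region for `φ ≤ 2j + s`; so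
`v₂(y) > j`, and `φ(y) > 2j + s` then forces `Re y` and `Re y + |Im y|` to be at least `2ʲ`
times consecutive differences of `w`. Consequently `v₂(y - x) = j` and `y - x` lies in the region
for `φ ≤ 2j + s`.
-/

lemma w_add_two (t : ℕ) : w (t + 2) = 2 * w t := by
  have h : (t + 2) / 2 = t / 2 + 1 := by omega
  simp only [w, Nat.add_mod_right, h, pow_succ]
  split_ifs <;> ring

lemma w_add_two_mul (t c : ℕ) : w (t + 2 * c) = 2 ^ c * w t := by
  induction c with
  | zero => simp
  | succ c ih => rw [mul_add, mul_one, ← add_assoc, w_add_two, ih, pow_succ]; ring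

lemma w_succ_sub_w (t : ℕ) : w (t + 1) - w t = 2 ^ ((t + 1) / 2) := by
  rcases Nat.even_or_odd' t with ⟨s, rfl | rfl⟩
  · have h₁ : (2 * s + 1) / 2 = s := by omega
    simp [w, Nat.mul_mod_right, h₁]
    ring
  · have h₁ : (2 * s + 1 + 1) / 2 = s + 1 := by omega
    have h₂ : (2 * s + 1) / 2 = s := by omega
    have h₃ : (2 * s + 1 + 1) % 2 = 0 := by omega
    simp [w, h₁, h₂, h₃, pow_succ]
    ring

lemma w_lt_w_succ (t : ℕ) : w t < w (t + 1) := by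
  have := w_succ_sub_w t
  have : (0 : ℤ) < 2 ^ ((t + 1) / 2) := by positivity
  omega

lemma w_strictMono : StrictMono w := strictMono_nat_of_lt_succ w_lt_w_succ

lemma w_succ_add_two_le (t : ℕ) : w (t + 1) + 2 ≤ w (t + 2) := by
  have h : w (t + 2) - w (t + 1) = 2 ^ ((t + 1 + 1) / 2) := w_succ_sub_w (t + 1)
  have : (2 : ℤ) ≤ 2 ^ ((t + 1 + 1) / 2) :=
    le_self_pow₀ (by norm_num) (by omega)
  omega

lemma two_dvd_w_succ (t : ℕ) : (2 : ℤ) ∣ w (t + 1) := by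
  rcases Nat.even_or_odd' t with ⟨s, rfl | rfl⟩
  · have h₁ : (2 * s + 1) / 2 = s := by omega
    simp [w, h₁]
    exact Dvd.intro (2 * 2 ^ s) (by ring)
  · rw [show 2 * s + 1 + 1 = 0 + 2 * (s + 1) by ring, w_add_two_mul, pow_succ]
    exact Dvd.intro (2 ^ s * w 0) (by ring)

lemma le_w (t : ℕ) : (t : ℤ) ≤ w t := by
  induction t with
  | zero => simp [w]
  | succ t ih => push_cast; linarith [w_lt_w_succ t]

lemma l1_le_two_mul_linf (z : GaussianInt) : l1 z ≤ 2 * linf z := by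
  simp only [l1, linf]; omega

lemma linf_le_l1 (z : GaussianInt) : linf z ≤ l1 z := by
  have := abs_nonneg z.re
  have := abs_nonneg z.im
  simp only [l1, linf]; omega

lemma two_mul_v2_le_phi (z : GaussianInt) : 2 * v2 z ≤ phi z := by
  unfold phi; dsimp only; split_ifs <;> omega

lemma phi_le_iff (z : GaussianInt) (t : ℕ) :
    phi z ≤ 2 * v2 z + t ↔
      linf z ≤ 2 ^ v2 z * (w t - 2) ∧ l1 z ≤ 2 ^ v2 z * (w (t + 1) - 3) := by
  set J : ℤ := 2 ^ v2 z
  have hJ : 0 < J := by positivity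
  set S : Set ℕ := {n | |z.re| ≤ J * (w n - 2) ∧ |z.im| ≤ J * (w n - 2)}
  have mem_S : ∀ n, n ∈ S ↔ linf z ≤ J * (w n - 2) := fun n => max_le_iff.symm
  have hS : (linf z).toNat + 2 ∈ S := by
    have hw := le_w ((linf z).toNat + 2)
    have := Int.self_le_toNat (linf z)
    push_cast at hw
    rw [mem_S]
    nlinarith
  set n₀ := sInf S
  have hn₀ : linf z ≤ J * (w n₀ - 2) := (mem_S n₀).1 (Nat.sInf_mem ⟨_, hS⟩)
  have mono : ∀ {a b : ℕ} {c : ℤ}, a ≤ b → J * (w a - c) ≤ J * (w b - c) := fun h =>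
    mul_le_mul_of_nonneg_left (by linarith [w_strictMono.monotone h]) hJ.le
  have hphi : phi z = if l1 z ≤ J * (w (n₀ + 1) - 3) then n₀ + 2 * v2 z
      else n₀ + 2 * v2 z + 1 := rfl
  constructor
  · intro h
    by_cases hl1 : l1 z ≤ J * (w (n₀ + 1) - 3)
    · rw [hphi, if_pos hl1] at h
      exact ⟨hn₀.trans (mono (by omega)), hl1.trans (mono (by omega))⟩
    · rw [hphi, if_neg hl1] at h
      refine ⟨hn₀.trans (mono (by omega)), ?_⟩
      -- `l1 ≤ 2 linf ≤ J (w (n₀ + 2) - 4)`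
      have := mono (c := 3) (show n₀ + 2 ≤ t + 1 by omega)
      rw [w_add_two] at this
      linarith [l1_le_two_mul_linf z]
  · rintro ⟨hlinf, hl1⟩
    have hle : n₀ ≤ t := Nat.sInf_le ((mem_S t).2 hlinf)
    rw [hphi]
    rcases hle.eq_or_lt with rfl | hlt
    · rw [if_pos hl1]; omega
    · split_ifs <;> omega

lemma pow_dvd_gcd_iff (z : GaussianInt) (i : ℕ) :
    2 ^ i ∣ Int.gcd z.re z.im ↔ (2 : ℤ) ^ i ∣ z.re ∧ (2 : ℤ) ^ i ∣ z.im := by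
  rw [Int.dvd_gcd_iff]; push_cast; rfl

lemma pow_v2_dvd (z : GaussianInt) : (2 : ℤ) ^ v2 z ∣ z.re ∧ (2 : ℤ) ^ v2 z ∣ z.im :=
  (pow_dvd_gcd_iff z _).1 pow_padicValNat_dvd

lemma le_v2_iff {z : GaussianInt} (hz : z ≠ 0) {i : ℕ} :
    i ≤ v2 z ↔ (2 : ℤ) ^ i ∣ z.re ∧ (2 : ℤ) ^ i ∣ z.im := by
  have hgcd : Int.gcd z.re z.im ≠ 0 := fun h => hz (Zsqrtd.ext_iff.2 (Int.gcd_eq_zero_iff.1 h))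
  rw [← pow_dvd_gcd_iff, v2, padicValNat_dvd_iff_le hgcd]

lemma not_pow_v2_succ_dvd {z : GaussianInt} (hz : z ≠ 0) :
    ¬((2 : ℤ) ^ (v2 z + 1) ∣ z.re ∧ (2 : ℤ) ^ (v2 z + 1) ∣ z.im) := by
  rw [← le_v2_iff hz]; omega

lemma v2_sub_of_lt {x y : GaussianInt} (hx : x ≠ 0) (h : v2 x < v2 y) : v2 (y - x) = v2 x := by
  have hyx : y - x ≠ 0 := fun h0 => by rw [sub_eq_zero.1 h0] at h; exact h.false
  have hy : ∀ i ≤ v2 y, (2 : ℤ) ^ i ∣ y.re ∧ (2 : ℤ) ^ i ∣ y.im := fun i hi =>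
    (pow_v2_dvd y).imp (dvd_trans (pow_dvd_pow 2 hi)) (dvd_trans (pow_dvd_pow 2 hi))
  apply le_antisymm
  · by_contra! hlt
    obtain ⟨hre, him⟩ := (le_v2_iff hyx).1 hlt
    obtain ⟨hyre, hyim⟩ := hy _ h
    exact not_pow_v2_succ_dvd hx
      ⟨by simpa using dvd_sub hyre hre, by simpa using dvd_sub hyim him⟩
  · obtain ⟨hyre, hyim⟩ := hy _ h.le
    rw [le_v2_iff hyx, Zsqrtd.re_sub, Zsqrtd.im_sub]
    exact ⟨dvd_sub hyre (pow_v2_dvd x).1, dvd_sub hyim (pow_v2_dvd x).2⟩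

lemma pow_v2_dvd_linf (z : GaussianInt) : (2 : ℤ) ^ v2 z ∣ linf z := by
  rcases max_choice |z.re| |z.im| with h | h <;> rw [linf, h, dvd_abs]
  exacts [(pow_v2_dvd z).1, (pow_v2_dvd z).2]

lemma pow_v2_dvd_l1 (z : GaussianInt) : (2 : ℤ) ^ v2 z ∣ l1 z :=
  dvd_add ((dvd_abs _ _).2 (pow_v2_dvd z).1) ((dvd_abs _ _).2 (pow_v2_dvd z).2)

lemma pow_v2_le_linf {z : GaussianInt} (hz : z ≠ 0) : 2 ^ v2 z ≤ linf z := by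
  refine Int.le_of_dvd ?_ (pow_v2_dvd_linf z)
  by_contra! h
  have hre : |z.re| ≤ 0 := le_of_max_le_left h
  have him : |z.im| ≤ 0 := le_of_max_le_right h
  exact hz (Zsqrtd.ext (abs_nonpos_iff.1 hre) (abs_nonpos_iff.1 him))

lemma eq_of_isUnit {u : GaussianInt} (hu : IsUnit u) : u = 1 ∨ u = -1 ∨ u = Ii ∨ u = -Ii := by
  have h := (Zsqrtd.norm_eq_one_iff' (by norm_num) u).2 hu
  obtain ⟨a, b⟩ := u
  simp only [Zsqrtd.norm_def] at h
  have ha₁ : -1 ≤ a := by nlinarith [mul_self_nonneg b]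
  have ha₂ : a ≤ 1 := by nlinarith [mul_self_nonneg b]
  have hb₁ : -1 ≤ b := by nlinarith
  have hb₂ : b ≤ 1 := by nlinarith
  interval_cases a <;> interval_cases b <;> simp_all [Zsqrtd.ext_iff, Ii]

lemma mul_star_self_of_isUnit {u : GaussianInt} (hu : IsUnit u) : u * star u = 1 := by
  rw [← Zsqrtd.norm_eq_mul_conj, (Zsqrtd.norm_eq_one_iff' (by norm_num) u).2 hu, Int.cast_one]

lemma isUnit_uz (z : GaussianInt) : IsUnit (uz z) := by
  have hIi : IsUnit Ii := IsUnit.of_mul_eq_one (-Ii) (by ext <;> simp [Ii])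
  unfold uz
  split_ifs <;> simp [hIi]

lemma linf_unit_mul {u : GaussianInt} (hu : IsUnit u) (z : GaussianInt) :
    linf (u * z) = linf z := by
  rcases eq_of_isUnit hu with rfl | rfl | rfl | rfl <;> simp [linf, Ii, max_comm]

lemma l1_unit_mul {u : GaussianInt} (hu : IsUnit u) (z : GaussianInt) :
    l1 (u * z) = l1 z := by
  rcases eq_of_isUnit hu with rfl | rfl | rfl | rfl <;> simp [l1, Ii, add_comm]

lemma Nm_unit_mul {u : GaussianInt} (hu : IsUnit u) (z : GaussianInt) :
    Nm (u * z) = Nm z := by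
  rcases eq_of_isUnit hu with rfl | rfl | rfl | rfl <;> simp [Nm, Ii, add_comm]

lemma v2_unit_mul {u : GaussianInt} (hu : IsUnit u) (z : GaussianInt) :
    v2 (u * z) = v2 z := by
  rcases eq_of_isUnit hu with rfl | rfl | rfl | rfl <;> simp [v2, Ii, Int.gcd_comm]

lemma phi_congr {z z' : GaussianInt} (hv : v2 z' = v2 z) (hlinf : linf z' = linf z)
    (hl1 : l1 z' = l1 z) : phi z' = phi z := by
  have key : ∀ t, phi z' ≤ 2 * v2 z + t ↔ phi z ≤ 2 * v2 z + t := fun t => by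
    rw [phi_le_iff z, ← hv, phi_le_iff z', hv, hlinf, hl1]
  obtain ⟨t, ht⟩ := Nat.exists_eq_add_of_le (two_mul_v2_le_phi z)
  obtain ⟨t', ht'⟩ := Nat.exists_eq_add_of_le (hv ▸ two_mul_v2_le_phi z')
  refine le_antisymm ?_ ?_
  · rw [ht]; exact (key t).2 ht.le
  · rw [ht']; exact (key t').1 ht'.le

lemma phi_unit_mul {u : GaussianInt} (hu : IsUnit u) (z : GaussianInt) : phi (u * z) = phi z :=
  phi_congr (v2_unit_mul hu z) (linf_unit_mul hu z) (l1_unit_mul hu z)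

lemma abs_im_le_re_uz_mul (z : GaussianInt) : |(uz z * z).im| ≤ (uz z * z).re := by
  unfold uz
  split_ifs <;> simp [Ii] <;> grind

lemma linf_of_abs_im_le {z : GaussianInt} (h : |z.im| ≤ z.re) : linf z = z.re := by
  rw [linf, abs_of_nonneg ((abs_nonneg _).trans h), max_eq_left h]

lemma l1_of_abs_im_le {z : GaussianInt} (h : |z.im| ≤ z.re) : l1 z = z.re + |z.im| := by
  rw [l1, abs_of_nonneg ((abs_nonneg _).trans h)]

lemma abs_sub_nint_le (x : ℚ) : |x - nint x| ≤ 1 / 2 := by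
  unfold nint
  split_ifs with h
  · rwa [abs_of_nonneg (sub_nonneg.2 (Int.floor_le x))]
  · have hc : (⌈x⌉ : ℚ) ≤ ⌊x⌋ + 1 := by exact_mod_cast Int.ceil_le_floor_add_one x
    rw [abs_sub_comm, abs_of_nonneg (sub_nonneg.2 (Int.le_ceil x))]
    linarith

lemma two_mul_abs_sub_nint_mul_le (C N : ℤ) (hN : 0 < N) :
    2 * |C - nint ((C : ℚ) / N) * N| ≤ N := by
  have hNq : (0 : ℚ) < N := by exact_mod_cast hN
  have h := abs_sub_nint_le ((C : ℚ) / N)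
  have hC : (C : ℚ) - nint ((C : ℚ) / N) * N = ((C : ℚ) / N - nint ((C : ℚ) / N)) * N := by
    field_simp
  suffices (2 : ℚ) * |(C : ℚ) - nint ((C : ℚ) / N) * N| ≤ N by exact_mod_cast this
  rw [hC, abs_mul, abs_of_pos hNq]
  nlinarith

lemma two_mul_linf_gr_mul_star_le (a : GaussianInt) {b : GaussianInt} (hb : b ≠ 0) :
    2 * linf (gr a b * star b) ≤ Nm b := by
  have hN : 0 < Nm b := by
    have := GaussianInt.norm_pos.2 hb
    rw [Zsqrtd.norm_def] at this
    unfold Nm; linarith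
  have hre : (gr a b * star b).re = (a.re * b.re + a.im * b.im) -
      nint (((a.re * b.re + a.im * b.im : ℤ) : ℚ) / (Nm b : ℚ)) * Nm b := by
    simp [gr, gq, Nm]; ring
  have him : (gr a b * star b).im = (a.im * b.re - a.re * b.im) -
      nint (((a.im * b.re - a.re * b.im : ℤ) : ℚ) / (Nm b : ℚ)) * Nm b := by
    simp [gr, gq, Nm]; ring
  rw [linf, mul_max_of_nonneg _ _ zero_le_two, hre, him]
  exact max_le (two_mul_abs_sub_nint_mul_le _ _ hN) (two_mul_abs_sub_nint_mul_le _ _ hN)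

lemma add_le_of_dvd_of_lt {K x y : ℤ} (hK : 0 < K) (hx : K ∣ x) (hy : K ∣ y) (h : x < y) :
    x + K ≤ y := by
  obtain ⟨e, rfl⟩ := hx
  obtain ⟨f, rfl⟩ := hy
  have : e < f := lt_of_mul_lt_mul_left h hK.le
  nlinarith

lemma phi_lt_of_two_mul_linf_le {z : GaussianInt} (hz : z ≠ 0) {j : ℕ}
    (h : 2 * linf z ≤ 2 ^ j) : phi z < 2 * j := by
  set k := v2 z
  have hk : k < j := by
    have : (2 : ℤ) ^ (k + 1) ≤ 2 ^ j := by rw [pow_succ]; linarith [pow_v2_le_linf hz]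
    exact Nat.lt_of_succ_le ((pow_le_pow_iff_right₀ (by norm_num)).1 this)
  obtain ⟨d, rfl⟩ := Nat.exists_eq_add_of_lt hk
  have hphi : phi z ≤ 2 * k + (1 + 2 * d) := by
    have hK : (0 : ℤ) < 2 ^ k := by positivity
    have hD : (1 : ℤ) ≤ 2 ^ d := one_le_pow₀ (by norm_num)
    have hlinf : linf z ≤ 2 ^ k * 2 ^ d := by rw [pow_add, pow_add] at h; linarith
    rw [phi_le_iff, show 1 + 2 * d + 1 = 0 + 2 * (d + 1) by ring, w_add_two_mul,
      w_add_two_mul, pow_succ]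
    simp only [w, Nat.reduceMod, Nat.reduceDiv, pow_zero, if_true, one_ne_zero, if_false]
    constructor <;> nlinarith [l1_le_two_mul_linf z]
  omega

lemma phi_le_of_v2_le {z : GaussianInt} {j s : ℕ} (hk : v2 z ≤ j)
    (hlinf : 2 * linf z ≤ 2 ^ j * (2 * w s - 3))
    (hl1 : l1 z + 2 ^ v2 z ≤ 2 ^ j * (w (s + 1) - 2)) : phi z ≤ 2 * j + s := by
  set k := v2 z
  obtain ⟨d, rfl⟩ := Nat.exists_eq_add_of_le hk
  have hK : (0 : ℤ) < 2 ^ k := by positivity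
  have hKD : (2 : ℤ) ^ k ≤ 2 ^ k * 2 ^ d :=
    le_mul_of_one_le_right hK.le (one_le_pow₀ (by norm_num))
  rw [pow_add] at hlinf hl1
  have hphi : phi z ≤ 2 * k + (s + 2 * d) := by
    rw [phi_le_iff, show s + 2 * d + 1 = s + 1 + 2 * d by ring, w_add_two_mul, w_add_two_mul]
    constructor
    · have := add_le_of_dvd_of_lt hK (pow_v2_dvd_linf z) (Dvd.intro (2 ^ d * w s - 1) rfl)
        (show linf z < 2 ^ k * (2 ^ d * w s - 1) by linarith)
      linarith
    · linarith
  omega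

lemma le_linf_l1_of_lt_phi {z : GaussianInt} (hz : z ≠ 0) {j s : ℕ} (hk : j ≤ v2 z)
    (h : 2 * j + s < phi z) :
    2 ^ j * (w (s + 1) - w s) ≤ linf z ∧ 2 ^ j * (w (s + 2) - w (s + 1)) ≤ l1 z := by
  obtain ⟨c, hc⟩ := Nat.exists_eq_add_of_le hk
  have hl1 := linf_le_l1 z
  have hl1' := l1_le_two_mul_linf z
  have hJ : (0 : ℤ) < 2 ^ j := by positivity
  rcases lt_or_ge s (2 * c) with hs | hs
  · have hlinf : 2 ^ j * 2 ^ c ≤ linf z := by rw [← pow_add, ← hc]; exact pow_v2_le_linf hz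
    have h₁ : (2 : ℤ) ^ ((s + 1) / 2) ≤ 2 ^ c := pow_le_pow_right₀ (by norm_num) (by omega)
    have h₂ : (2 : ℤ) ^ ((s + 1 + 1) / 2) ≤ 2 ^ c := pow_le_pow_right₀ (by norm_num) (by omega)
    rw [w_succ_sub_w, show s + 2 = s + 1 + 1 by rfl, w_succ_sub_w]
    constructor <;> nlinarith
  obtain ⟨t, rfl⟩ : ∃ t, s = t + 2 * c := ⟨s - 2 * c, by omega⟩
  set K : ℤ := 2 ^ v2 z
  have hK : 0 < K := by positivity
  have hscale : ∀ i, 2 ^ j * w (i + 2 * c) = K * w i := fun i => by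
    rw [w_add_two_mul, ← mul_assoc, ← pow_add, ← hc]
  have hfail : ¬ phi z ≤ 2 * v2 z + t := by omega
  rw [phi_le_iff, not_and_or, not_le, not_le] at hfail
  have hw₁ := w_lt_w_succ t
  have hw₃ := w_succ_add_two_le t
  have hw₄ := w_add_two t
  rw [mul_sub, mul_sub, show t + 2 * c + 1 = t + 1 + 2 * c by ring,
    show t + 2 * c + 2 = t + 2 + 2 * c by ring, hscale t, hscale (t + 1), hscale (t + 2)]
  rcases hfail with h₁ | h₁
  · have := add_le_of_dvd_of_lt hK (Dvd.intro _ rfl) (pow_v2_dvd_linf z) h₁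
    have h₂ : K * (w (t + 1) - w t) ≤ K * (w t - 1) :=
      mul_le_mul_of_nonneg_left (by linarith) hK.le
    have h₃ : K * (w (t + 2) - w (t + 1)) ≤ K * (w t - 1) :=
      mul_le_mul_of_nonneg_left (by linarith) hK.le
    constructor <;> linarith
  · have := add_le_of_dvd_of_lt hK (Dvd.intro _ rfl) (pow_v2_dvd_l1 z) h₁
    have h₂ : K * (2 * (w (t + 1) - w t)) ≤ K * (w (t + 1) - 2) :=
      mul_le_mul_of_nonneg_left (by linarith) hK.le
    have h₃ : K * (w (t + 2) - w (t + 1)) ≤ K * (w (t + 1) - 2) :=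
      mul_le_mul_of_nonneg_left (by linarith) hK.le
    constructor <;> linarith

section inner
variable {M m μ ν : ℤ}

lemma two_mul_le_add_of_inner_le (hM : 0 < M) (hm : 0 ≤ m) (hmM : m ≤ M) (hν : 0 ≤ ν)
    (h : 2 * (μ * M + ν * m) ≤ M ^ 2 + m ^ 2) : 2 * μ ≤ M + m := by
  refine le_of_mul_le_mul_right ?_ hM
  nlinarith [mul_nonneg hν hm, mul_le_mul_of_nonneg_right hmM hm]

lemma add_mul_add_le_of_inner_le (hmM : m ≤ M) (hνμ : ν ≤ μ)
    (h : 2 * (μ * M + ν * m) ≤ M ^ 2 + m ^ 2) : (μ + ν) * (M + m) ≤ M ^ 2 + m ^ 2 := by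
  nlinarith [mul_nonneg (sub_nonneg.2 hνμ) (sub_nonneg.2 hmM)]

lemma add_le_of_inner_le (hM : 0 < M) (hm : 0 ≤ m) (hmM : m ≤ M) (hνμ : ν ≤ μ)
    (h : 2 * (μ * M + ν * m) ≤ M ^ 2 + m ^ 2) : μ + ν ≤ M := by
  refine le_of_mul_le_mul_right ?_ (by linarith : 0 < M + m)
  nlinarith [add_mul_add_le_of_inner_le hmM hνμ h, mul_le_mul_of_nonneg_right hmM hm]

lemma eq_zero_or_eq_of_inner_le (hm : 0 ≤ m) (hmM : m ≤ M) (hνμ : ν ≤ μ)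
    (h : 2 * (μ * M + ν * m) ≤ M ^ 2 + m ^ 2) (heq : μ + ν = M) : m = 0 ∨ m = M := by
  have := add_mul_add_le_of_inner_le hmM hνμ h
  rw [heq] at this
  rcases hm.eq_or_lt with h0 | hpos
  · exact Or.inl h0.symm
  · exact Or.inr (le_antisymm hmM (le_of_mul_le_mul_left (by nlinarith) hpos))

end inner

lemma le_mul_sub_two_of_two_mul_le {J a X : ℤ} (hJ : 0 < J) (hd : J ∣ a)
    (h : 2 * a ≤ J * (2 * X - 3)) : a ≤ J * (X - 2) := by
  obtain ⟨e, rfl⟩ := hd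
  have : 2 * e ≤ 2 * X - 3 := le_of_mul_le_mul_left (by linarith) hJ
  exact mul_le_mul_of_nonneg_left (by omega) hJ.le

lemma sub_add_abs_sub_le {J W M m μ ν : ℤ} (hJ : 0 < J) (hW : 2 ∣ W) (hM : J ∣ M) (hmJ : J ∣ m)
    (hμν : 2 * J ∣ μ - ν) (hodd : ¬(2 * J ∣ M ∧ 2 * J ∣ m)) (hm : 0 ≤ m) (hνμ : ν ≤ μ)
    (h₁ : M ≤ J * (W - 2)) (h₂ : M + m - (μ + ν) ≤ J * (W - 3)) :
    M - μ + |ν - m| ≤ J * (W - 3) := by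
  rcases le_total ν m with hνm | hmν
  · rw [abs_of_nonpos (sub_nonpos.2 hνm)]; linarith
  rw [abs_of_nonneg (sub_nonneg.2 hmν)]
  rcases hm.eq_or_lt with rfl | hm
  · rcases hνμ.eq_or_lt with rfl | hνμ
    · -- `M / J` is odd while `W - 2` is even
      obtain ⟨e, rfl⟩ := hM
      obtain ⟨f, rfl⟩ := hW
      have : e ≤ 2 * f - 2 := le_of_mul_le_mul_left h₁ hJ
      have : e ≠ 2 * f - 2 := by
        rintro rfl
        exact hodd ⟨⟨f - 1, by ring⟩, dvd_zero _⟩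
      have : J * e ≤ J * (2 * f - 3) := mul_le_mul_of_nonneg_left (by omega) hJ.le
      linarith
    · linarith [Int.le_of_dvd (by linarith) hμν]
  · linarith [Int.le_of_dvd hm hmJ]

lemma abs_sub_eq_abs_abs_sub_abs {a b : ℤ} (h : 0 ≤ a * b) : |a - b| = |(|a| - |b|)| := by
  rcases le_total 0 a with ha | ha <;> rcases le_total 0 b with hb | hb
  · rw [abs_of_nonneg ha, abs_of_nonneg hb]
  · rcases mul_eq_zero.1 (le_antisymm (mul_nonpos_of_nonneg_of_nonpos ha hb) h) with rfl | rfl <;>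
      simp
  · rcases mul_eq_zero.1 (le_antisymm (mul_nonpos_of_nonpos_of_nonneg ha hb) h) with rfl | rfl <;>
      simp
  · rw [abs_of_nonpos ha, abs_of_nonpos hb, ← abs_neg]; ring_nf

lemma v2_lt_v2_of_lt_phi {x y : GaussianInt} (hx : x ≠ 0) (hxre : |x.im| ≤ x.re)
    (hyre : |y.im| ≤ y.re) {s : ℕ}
    (hR : 2 * (y.re * x.re + |y.im| * |x.im|) ≤ x.re ^ 2 + |x.im| ^ 2)
    (hb₁ : x.re ≤ 2 ^ v2 x * (w (s + 1) - 2)) (hb₂ : x.re + |x.im| ≤ 2 ^ v2 x * (w (s + 2) - 3))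
    (hphi : 2 * v2 x + s < phi y) : v2 x < v2 y := by
  have hM : 0 < x.re := (pow_pos two_pos _).trans_le (linf_of_abs_im_le hxre ▸ pow_v2_le_linf hx)
  have h2μ := two_mul_le_add_of_inner_le hM (abs_nonneg _) hxre (abs_nonneg _) hR
  have hμν := add_le_of_inner_le hM (abs_nonneg _) hxre hyre hR
  by_contra! hk
  -- equality would make both `x.re` and `x.im` divisible by `2 ^ (v2 x + 1)`
  have hne : y.re + |y.im| ≠ 2 ^ v2 x * (w (s + 1) - 2) := by
    intro heq
    obtain ⟨f, hf⟩ := two_dvd_w_succ s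
    have hxeq : x.re = 2 ^ v2 x * (w (s + 1) - 2) := by linarith
    have hdvd : 2 ^ (v2 x + 1) ∣ x.re := ⟨f - 1, by rw [hxeq, hf, pow_succ]; ring⟩
    refine not_pow_v2_succ_dvd hx ⟨hdvd, (dvd_abs _ _).1 ?_⟩
    rcases eq_zero_or_eq_of_inner_le (abs_nonneg _) hxre hyre hR (by linarith) with h | h <;>
      rw [h]
    exacts [dvd_zero _, hdvd]
  have := phi_le_of_v2_le hk (j := v2 x) (s := s)
    (by rw [linf_of_abs_im_le hyre]; rw [w_add_two] at hb₂; linarith)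
    (by
      rw [l1_of_abs_im_le hyre]
      refine add_le_of_dvd_of_lt (by positivity) (l1_of_abs_im_le hyre ▸ pow_v2_dvd_l1 y)
        (dvd_mul_of_dvd_left (pow_dvd_pow 2 hk) _) (lt_of_le_of_ne (by linarith) hne))
  omega

lemma phi_sub_le_of_v2_lt {x y : GaussianInt} (hx : x ≠ 0) (hxre : |x.im| ≤ x.re)
    (hyre : |y.im| ≤ y.re) (him : 0 ≤ x.im * y.im) (hjk : v2 x < v2 y) {s : ℕ}
    (hb₁ : x.re ≤ 2 ^ v2 x * (w (s + 1) - 2)) (hb₂ : x.re + |x.im| ≤ 2 ^ v2 x * (w (s + 2) - 3))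
    (h2μ : 2 * y.re ≤ x.re + |x.im|)
    (hc₁ : 2 ^ v2 x * (w (s + 1) - w s) ≤ y.re)
    (hc₂ : 2 ^ v2 x * (w (s + 2) - w (s + 1)) ≤ y.re + |y.im|) :
    phi (y - x) ≤ 2 * v2 x + s := by
  have hJ : (0 : ℤ) < 2 ^ v2 x := by positivity
  obtain ⟨hxre', hxim'⟩ := pow_v2_dvd x
  have hy : ∀ i ≤ v2 y, (2 : ℤ) ^ i ∣ y.re ∧ (2 : ℤ) ^ i ∣ |y.im| := fun i hi =>
    ⟨(pow_dvd_pow 2 hi).trans (pow_v2_dvd y).1,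
      (dvd_abs _ _).2 ((pow_dvd_pow 2 hi).trans (pow_v2_dvd y).2)⟩
  rw [w_add_two] at hb₂ hc₂
  have hμ := le_mul_sub_two_of_two_mul_le hJ (hy _ hjk.le).1 (X := w s) (by linarith)
  have hm := le_mul_sub_two_of_two_mul_le hJ ((dvd_abs _ _).2 hxim') (X := w s) (by linarith)
  rw [← v2_sub_of_lt hx hjk, phi_le_iff, v2_sub_of_lt hx hjk, linf, l1, Zsqrtd.re_sub,
    Zsqrtd.im_sub, abs_sub_comm, abs_of_nonneg (by linarith : 0 ≤ x.re - y.re),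
    abs_sub_eq_abs_abs_sub_abs (by linarith [mul_comm x.im y.im] : 0 ≤ y.im * x.im)]
  refine ⟨max_le (by linarith) (abs_sub_le_iff.2 ⟨by linarith, by linarith [abs_nonneg y.im]⟩),
    ?_⟩
  have hdvd := hy (v2 x + 1) hjk
  refine sub_add_abs_sub_le hJ (two_dvd_w_succ s) hxre' ((dvd_abs _ _).2 hxim')
    (by rw [← pow_succ']; exact dvd_sub hdvd.1 hdvd.2) ?_ (abs_nonneg _) hyre hb₁ (by linarith)
  rw [← pow_succ', dvd_abs]
  exact not_pow_v2_succ_dvd hx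

theorem phi_sub_lt_of_two_mul_re_mul_star_le {x y : GaussianInt} (hx : x ≠ 0) (hy : y ≠ 0)
    (hxre : |x.im| ≤ x.re) (hyre : |y.im| ≤ y.re) (him : 0 ≤ x.im * y.im)
    (hinner : 2 * (y * star x).re ≤ Nm x) (hphi : phi x ≤ phi y) : phi (y - x) < phi x := by
  have hR : 2 * (y.re * x.re + |y.im| * |x.im|) ≤ x.re ^ 2 + |x.im| ^ 2 := by
    rw [← abs_mul, abs_of_nonneg (by linarith [mul_comm x.im y.im]), sq_abs]
    simpa [Nm, Zsqrtd.re_mul] using hinner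
  have hM : 0 < x.re := (pow_pos two_pos _).trans_le (linf_of_abs_im_le hxre ▸ pow_v2_le_linf hx)
  have h2μ := two_mul_le_add_of_inner_le hM (abs_nonneg _) hxre (abs_nonneg _) hR
  obtain ⟨t, ht⟩ := Nat.exists_eq_add_of_le (two_mul_v2_le_phi x)
  have hb := (phi_le_iff x t).1 ht.le
  rw [linf_of_abs_im_le hxre, l1_of_abs_im_le hxre] at hb
  obtain ⟨s, rfl⟩ : ∃ s, t = s + 1 := by
    refine Nat.exists_eq_add_one.2 (Nat.pos_of_ne_zero fun ht₀ => ?_)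
    subst ht₀
    norm_num [w] at hb
    have := phi_lt_of_two_mul_linf_le hy (j := v2 x)
      (by rw [linf_of_abs_im_le hyre]; linarith)
    omega
  have hjk := v2_lt_v2_of_lt_phi hx hxre hyre hR hb.1 hb.2 (by omega)
  obtain ⟨hc₁, hc₂⟩ := le_linf_l1_of_lt_phi hy hjk.le (s := s) (by omega)
  rw [linf_of_abs_im_le hyre] at hc₁
  rw [l1_of_abs_im_le hyre] at hc₂
  have := phi_sub_le_of_v2_lt hx hxre hyre him hjk hb.1 hb.2 h2μ hc₁ hc₂
  omega

theorem stmt16_general (a b r : GaussianInt) (hb : b ≠ 0) (hr : r = gr a b)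
    (hr0 : r ≠ 0) (hphi : phi r ≥ phi b)
    (him : (uz b * b).im * (uz r * r).im ≥ 0) :
    phi (r - uz b * star (uz r) * b) < phi b := by
  have hub := isUnit_uz b
  have hur := isUnit_uz r
  have hinner : 2 * (uz r * r * star (uz b * b)).re ≤ Nm (uz b * b) := by
    have hrb : uz r * r * star (uz b * b) = uz r * star (uz b) * (r * star b) := by
      rw [star_mul']; ring
    calc 2 * (uz r * r * star (uz b * b)).re
        ≤ 2 * linf (uz r * r * star (uz b * b)) := by
          gcongr; exact (le_abs_self _).trans (le_max_left _ _)
      _ = 2 * linf (gr a b * star b) := by rw [hrb, linf_unit_mul (hur.mul hub.star), hr]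
      _ ≤ Nm (uz b * b) := by rw [Nm_unit_mul hub]; exact two_mul_linf_gr_mul_star_le a hb
  have hdiff : uz r * (r - uz b * star (uz r) * b) = uz r * r - uz b * b := by
    linear_combination (-(uz b * b)) * mul_star_self_of_isUnit hur
  rw [← phi_unit_mul hur, hdiff, ← phi_unit_mul hub b]
  refine phi_sub_lt_of_two_mul_re_mul_star_le (mul_ne_zero hub.ne_zero hb)
    (mul_ne_zero hur.ne_zero hr0) (abs_im_le_re_uz_mul b) (abs_im_le_re_uz_mul r) him hinner ?_
  rwa [phi_unit_mul hub, phi_unit_mul hur]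

theorem stmt16 (a b r : GaussianInt) (n : ℕ) (ha : a ≠ 0) (hb : b ≠ 0) (hr : r = gr a b)
    (hr0 : r ≠ 0) (hphi : phi r ≥ phi b) (hn : phi b = n)
    (him : (uz b * b).im * (uz r * r).im ≥ 0) :
    phi (r - uz b * star (uz r) * b) < phi b :=
  stmt16_general a b r hb hr hr0 hphi him
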